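/- Let T > R > P > S be real numbers with 2R > T + S, and let λ be a real number with 0 < λ < min{T−R, P−S} / (T−R+P−S). Define F(0,0)=R, F(0,1)=S, F(1,0)=T, F(1,1)=P, the stage payoffs u₁(κ₁,κ₂) = λ F(κ₁,κ₂) + (1−λ) F(κ̄₁,κ̄₂) and u₂(κ₁,κ₂) = λ F(κ₂,κ₁) + (1−λ) F(κ̄₂,κ̄₁) (κ̄ = 1−κ), and the twice-repeated game in which a strategy of player i is a pair (a, f) with a ∈ {0,1} and f : {0,1}×{0,1} → {0,1}, and the total payoffs are U₁((a,f),(b,g)) = u₁(a,b) + u₁(f(a,b), g(a,b)) and U₂((a,f),(b,g)) = u₂(a,b) + u₂(f(a,b), g(a,b)). Then: (i) the profile in which both players choose a = 0 and f identically 0 is a pure Nash equilibrium, with payoff 2Q for each player, where Q = λR + (1−λ)P > P; and (ii) every pure Nash equilibrium ((a,f),(b,g)) of this twice-repeated game satisfies a = b = 0 and f(0,0) = g(0,0) = 0, and hence yields payoff 2Q to each player. -/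

import Mathlib

/-- Player 1's stage payoff matrix `F` with `F 0 0 = R`, `F 0 1 = S`,
`F 1 0 = T`, `F 1 1 = P`. -/
noncomputable def Fpay (R S T P : ℝ) : Fin 2 → Fin 2 → ℝ := fun a b => !![R, S; T, P] a b

/-- Player 1's payoff in the Marinatto–Weber quantum game with initial state
`λ₀|00⟩ + λ₁|11⟩`, where `l = |λ₀|²`. -/
noncomputable def u₁ (R S T P l : ℝ) (κ₁ κ₂ : Fin 2) : ℝ :=
  l * Fpay R S T P κ₁ κ₂ + (1 - l) * Fpay R S T P (1 - κ₁) (1 - κ₂)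

/-- Player 2's payoff in the Marinatto–Weber quantum game with initial state
`λ₀|00⟩ + λ₁|11⟩`, where `l = |λ₀|²`. -/
noncomputable def u₂ (R S T P l : ℝ) (κ₁ κ₂ : Fin 2) : ℝ :=
  l * Fpay R S T P κ₂ κ₁ + (1 - l) * Fpay R S T P (1 - κ₂) (1 - κ₁)

/-- A pure Nash equilibrium of a two-player `2×2` bimatrix game. -/
def IsNash (w₁ w₂ : Fin 2 → Fin 2 → ℝ) (a b : Fin 2) : Prop :=
  (∀ a' : Fin 2, w₁ a' b ≤ w₁ a b) ∧ (∀ b' : Fin 2, w₂ a b' ≤ w₂ a b)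

/-- A strategy in the twice-repeated game: a first-stage action together with a
second-stage action for each of the four possible first-stage outcomes. -/
abbrev RepStrategy := Fin 2 × (Fin 2 → Fin 2 → Fin 2)

/-- Player 1's total payoff in the twice-repeated game with stage payoffs
`(u₁, u₂)`. -/
noncomputable def totU₁ (R S T P l : ℝ) (s t : RepStrategy) : ℝ :=
  u₁ R S T P l s.1 t.1 + u₁ R S T P l (s.2 s.1 t.1) (t.2 s.1 t.1)

/-- Player 2's total payoff in the twice-repeated game with stage payoffs
`(u₁, u₂)`. -/
noncomputable def totU₂ (R S T P l : ℝ) (s t : RepStrategy) : ℝ :=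
  u₂ R S T P l s.1 t.1 + u₂ R S T P l (s.2 s.1 t.1) (t.2 s.1 t.1)

/-- A pure Nash equilibrium of the twice-repeated game. -/
def IsNashRep (W₁ W₂ : RepStrategy → RepStrategy → ℝ) (s t : RepStrategy) : Prop :=
  (∀ s' : RepStrategy, W₁ s' t ≤ W₁ s t) ∧ (∀ t' : RepStrategy, W₂ s t' ≤ W₂ s t)

/-!
In the Marinatto–Weber stage game with small `λ`, action `0` strictly dominates action `1` for
both players. In any equilibrium of the twice-repeated game each player therefore plays `0` in the
second stage on the path, since changing only the continuation plan to `0` cannot affect the first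
stage. Given this, a player who opens with `1` gains by switching to the constant plan `0`: the
stage-one gain from dominance exceeds the worst second-stage punishment the opponent can inflict,
measured against the on-path outcome `(0, 0)`. Since player 2's game is player 1's with the roles
transposed, it suffices to argue for player 1.
-/

open Function

def repPayoff (w : Fin 2 → Fin 2 → ℝ) (s t : RepStrategy) : ℝ :=
  w s.1 t.1 + w (s.2 s.1 t.1) (t.2 s.1 t.1)

/-- The same strategy, with its second-stage plan read from the opponent's point of view. -/
def swapPlan (s : RepStrategy) : RepStrategy := (s.1, swap s.2)

@[simp]
lemma swapPlan_swapPlan (s : RepStrategy) : swapPlan (swapPlan s) = s := rfl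

lemma repPayoff_swap (w : Fin 2 → Fin 2 → ℝ) (s t : RepStrategy) :
    repPayoff (swap w) s t = repPayoff w (swapPlan t) (swapPlan s) := rfl

section RepeatedGame

variable {w : Fin 2 → Fin 2 → ℝ}

lemma isNashRep_swapPlan {s t : RepStrategy}
    (h : IsNashRep (repPayoff w) (repPayoff (swap w)) s t) :
    IsNashRep (repPayoff w) (repPayoff (swap w)) (swapPlan t) (swapPlan s) :=
  ⟨fun s' => by simpa [repPayoff_swap] using h.2 (swapPlan s'),
    fun t' => by simpa [repPayoff_swap] using h.1 (swapPlan t')⟩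

lemma isNashRep_zero (hw : ∀ a b, a ≠ 0 → w a b < w 0 b) :
    IsNashRep (repPayoff w) (repPayoff (swap w)) (0, fun _ _ => 0) (0, fun _ _ => 0) := by
  have hle : ∀ a b, w a b ≤ w 0 b := fun a b => by
    rcases eq_or_ne a 0 with rfl | ha
    exacts [le_rfl, (hw a b ha).le]
  exact ⟨fun s' => add_le_add (hle _ _) (hle _ _), fun t' => add_le_add (hle _ _) (hle _ _)⟩

/-- Changing only the second-stage plan to `0` is always available, so a best response plays the
dominant action on the path. -/
lemma onPath_eq_zero_of_isBestResponse (hw : ∀ a b, a ≠ 0 → w a b < w 0 b) {s t : RepStrategy}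
    (h : ∀ s', repPayoff w s' t ≤ repPayoff w s t) : s.2 s.1 t.1 = 0 := by
  by_contra hne
  have hdev := h (s.1, fun _ _ => 0)
  have := hw _ (t.2 s.1 t.1) hne
  simp only [repPayoff] at hdev
  linarith

lemma fst_eq_zero_of_isBestResponse
    (hkey : ∀ a b c, a ≠ 0 → w a b + w 0 0 < w 0 b + w 0 c) {s t : RepStrategy}
    (h : ∀ s', repPayoff w s' t ≤ repPayoff w s t)
    (hs : s.2 s.1 t.1 = 0) (ht : t.2 s.1 t.1 = 0) : s.1 = 0 := by
  by_contra hne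
  have hdev := h (0, fun _ _ => 0)
  have := hkey s.1 t.1 (t.2 0 t.1) hne
  simp only [repPayoff, hs, ht] at hdev
  linarith

theorem eq_zero_of_isNashRep (hw : ∀ a b, a ≠ 0 → w a b < w 0 b)
    (hkey : ∀ a b c, a ≠ 0 → w a b + w 0 0 < w 0 b + w 0 c) {s t : RepStrategy}
    (h : IsNashRep (repPayoff w) (repPayoff (swap w)) s t) :
    s.1 = 0 ∧ t.1 = 0 ∧ s.2 0 0 = 0 ∧ t.2 0 0 = 0 := by
  have h' := isNashRep_swapPlan h
  have hs : s.2 s.1 t.1 = 0 := onPath_eq_zero_of_isBestResponse hw h.1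
  have ht : t.2 s.1 t.1 = 0 := onPath_eq_zero_of_isBestResponse hw h'.1
  have hs₁ : s.1 = 0 := fst_eq_zero_of_isBestResponse hkey h.1 hs ht
  have ht₁ : t.1 = 0 :=
    fst_eq_zero_of_isBestResponse (s := swapPlan t) (t := swapPlan s) hkey h'.1 ht hs
  rw [hs₁, ht₁] at hs ht
  exact ⟨hs₁, ht₁, hs, ht⟩

lemma repPayoff_of_onPath_zero {s t : RepStrategy} (hs₁ : s.1 = 0) (ht₁ : t.1 = 0)
    (hs : s.2 0 0 = 0) (ht : t.2 0 0 = 0) : repPayoff w s t = 2 * w 0 0 := by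
  rw [repPayoff, hs₁, ht₁, hs, ht, two_mul]

end RepeatedGame

section MarinattoWeber

variable {R S T P l : ℝ}

lemma totU₁_eq : totU₁ R S T P l = repPayoff (u₁ R S T P l) := rfl

lemma totU₂_eq : totU₂ R S T P l = repPayoff (swap (u₁ R S T P l)) := rfl

@[simp] lemma u₁_zero_zero : u₁ R S T P l 0 0 = l * R + (1 - l) * P := by simp [u₁, Fpay]
@[simp] lemma u₁_zero_one : u₁ R S T P l 0 1 = l * S + (1 - l) * T := by simp [u₁, Fpay]
@[simp] lemma u₁_one_zero : u₁ R S T P l 1 0 = l * T + (1 - l) * S := by simp [u₁, Fpay]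
@[simp] lemma u₁_one_one : u₁ R S T P l 1 1 = l * P + (1 - l) * R := by simp [u₁, Fpay]

lemma u₁_lt_u₁_zero (hT : l * (T - R + P - S) < T - R) (hP : l * (T - R + P - S) < P - S)
    (a b : Fin 2) (ha : a ≠ 0) : u₁ R S T P l a b < u₁ R S T P l 0 b := by
  obtain rfl := Fin.eq_one_of_ne_zero a ha
  fin_cases b
  · simp only [Fin.zero_eta, u₁_one_zero, u₁_zero_zero]; linarith
  · simp only [Fin.mk_one, u₁_one_one, u₁_zero_one]; linarith

lemma u₁_add_u₁_zero_lt (hTR : R < T) (hRP : P < R) (hPS : S < P)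
    (hT : l * (T - R + P - S) < T - R) (hP : l * (T - R + P - S) < P - S)
    (a b c : Fin 2) (ha : a ≠ 0) :
    u₁ R S T P l a b + u₁ R S T P l 0 0 < u₁ R S T P l 0 b + u₁ R S T P l 0 c := by
  obtain rfl := Fin.eq_one_of_ne_zero a ha
  -- adding `hT` and `hP` gives `2λ < 1`
  have hl : 0 < 1 - 2 * l := by nlinarith
  have hTS : 0 < (1 - 2 * l) * (T - S) := mul_pos hl (by linarith)
  have hRP' : 0 < (1 - 2 * l) * (R - P) := mul_pos hl (by linarith)
  fin_cases b <;> fin_cases c <;>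
    simp only [Fin.zero_eta, Fin.mk_one, u₁_zero_zero, u₁_zero_one, u₁_one_zero, u₁_one_one] <;>
    linarith

end MarinattoWeber

theorem stmt_12_general (T R P S : ℝ) (hTR : R < T) (hRP : P < R) (hPS : S < P)
    (l : ℝ) (hl0 : 0 < l) (hl1 : l < min (T - R) (P - S) / (T - R + P - S)) :
    (IsNashRep (totU₁ R S T P l) (totU₂ R S T P l)
        (0, fun _ _ => 0) (0, fun _ _ => 0)
      ∧ totU₁ R S T P l (0, fun _ _ => 0) (0, fun _ _ => 0)
          = 2 * (l * R + (1 - l) * P)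
      ∧ totU₂ R S T P l (0, fun _ _ => 0) (0, fun _ _ => 0)
          = 2 * (l * R + (1 - l) * P)
      ∧ P < l * R + (1 - l) * P)
      ∧ ∀ s t : RepStrategy, IsNashRep (totU₁ R S T P l) (totU₂ R S T P l) s t →
          s.1 = 0 ∧ t.1 = 0 ∧ s.2 0 0 = 0 ∧ t.2 0 0 = 0
            ∧ totU₁ R S T P l s t = 2 * (l * R + (1 - l) * P)
            ∧ totU₂ R S T P l s t = 2 * (l * R + (1 - l) * P) := by
  have hD : 0 < T - R + P - S := by linarith
  have hm : l * (T - R + P - S) < min (T - R) (P - S) := (lt_div_iff₀ hD).mp hl1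
  have hT : l * (T - R + P - S) < T - R := hm.trans_le (min_le_left _ _)
  have hP : l * (T - R + P - S) < P - S := hm.trans_le (min_le_right _ _)
  have hdom := u₁_lt_u₁_zero hT hP
  have hkey := u₁_add_u₁_zero_lt hTR hRP hPS hT hP
  rw [totU₁_eq, totU₂_eq]
  refine ⟨⟨isNashRep_zero hdom, ?_, ?_, by nlinarith [mul_pos hl0 (sub_pos.2 hRP)]⟩, fun s t h => ?_⟩
  · exact (repPayoff_of_onPath_zero rfl rfl rfl rfl).trans (by simp)
  · exact (repPayoff_of_onPath_zero rfl rfl rfl rfl).trans (by simp [swap])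
  obtain ⟨hs₁, ht₁, hs, ht⟩ := eq_zero_of_isNashRep hdom hkey h
  refine ⟨hs₁, ht₁, hs, ht, ?_, ?_⟩
  · rw [repPayoff_of_onPath_zero hs₁ ht₁ hs ht, u₁_zero_zero]
  · rw [repPayoff_of_onPath_zero hs₁ ht₁ hs ht, swap, u₁_zero_zero]

/-- in the twice-repeated Marinatto–Weber quantum Prisoner's
Dilemma with `2R > T + S` and `0 < λ < min{T−R, P−S}/(T−R+P−S)`: (i) both players
playing first-stage action `0` and second-stage plan identically `0` is a pure
Nash equilibrium with payoff `2Q` each, where `Q = λR + (1−λ)P > P`; (ii) every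
pure Nash equilibrium has both first-stage actions `0` and both on-path
second-stage actions `0`, hence payoff `2Q` to each player. -/
theorem stmt_12 (T R P S : ℝ) (hTR : R < T) (hRP : P < R) (hPS : S < P)
    (h2R : T + S < 2 * R)
    (l : ℝ) (hl0 : 0 < l) (hl1 : l < min (T - R) (P - S) / (T - R + P - S)) :
    (IsNashRep (totU₁ R S T P l) (totU₂ R S T P l)
        (0, fun _ _ => 0) (0, fun _ _ => 0)
      ∧ totU₁ R S T P l (0, fun _ _ => 0) (0, fun _ _ => 0)
          = 2 * (l * R + (1 - l) * P)
      ∧ totU₂ R S T P l (0, fun _ _ => 0) (0, fun _ _ => 0)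
          = 2 * (l * R + (1 - l) * P)
      ∧ P < l * R + (1 - l) * P)
      ∧ ∀ s t : RepStrategy, IsNashRep (totU₁ R S T P l) (totU₂ R S T P l) s t →
          s.1 = 0 ∧ t.1 = 0 ∧ s.2 0 0 = 0 ∧ t.2 0 0 = 0
            ∧ totU₁ R S T P l s t = 2 * (l * R + (1 - l) * P)
            ∧ totU₂ R S T P l s t = 2 * (l * R + (1 - l) * P) :=
  stmt_12_general T R P S hTR hRP hPS l hl0 hl1
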